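/- Let (φ_k)_{k≥0} be a sequence of real numbers with φ_0 > 0, let ρ : {1,2,3,…} → ℝ, let F(z) = ∑_{n≥1} ( ∑_{T plane tree, |T|=n} w_deg(T)·w_h(T) ) z^n, and set G(z) = φ(F(z)) = ∑_{k≥0} φ_k F(z)^k (the forest generating function, whose constant term is φ_0). Suppose (b_k)_{k≥1} is a sequence of real numbers such that ∑_{k≥1} b_k (φ(t) − φ_0)^k = t holds as an identity of formal power series in t (so s ↦ ∑_{k≥1} b_k (s−φ_0)^k is a compositional inverse of φ at φ_0). Then for every n ≥ 1, ρ(n)·[z^{n-1}]G(z) = [z^n] ∑_{k≥1} b_k (G(z) − φ_0)^k. -/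

import Mathlib

/-- A plane tree (ordered rooted tree): a root together with a finite
sequence of plane trees (its root subtrees). -/
inductive PlaneTree : Type where
  | node : List PlaneTree → PlaneTree

namespace PlaneTree

/-- The size of a plane tree: its number of vertices. -/
def size : PlaneTree → ℕ
  | node ts => 1 + (ts.attach.map fun t => size t.1).sum
decreasing_by simp only [PlaneTree.node.sizeOf_spec]; have := List.sizeOf_lt_of_mem t.2; omega

/-- The degree weight `w_deg(T) = ∏_{v ∈ T} φ_{d(v)}`, where `d(v)` is the
out-degree of the vertex `v`. -/
noncomputable def degWeight (φ : ℕ → ℝ) : PlaneTree → ℝ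
  | node ts => φ ts.length * (ts.attach.map fun t => degWeight φ t.1).prod
decreasing_by simp only [PlaneTree.node.sizeOf_spec]; have := List.sizeOf_lt_of_mem t.2; omega

/-- The hook weight `w_h(T) = ∏_{v ∈ T} ρ(h_v)`, where the hook length `h_v`
is the number of vertices of the subtree of `T` rooted at `v`. -/
noncomputable def hookWeight (ρ : ℕ → ℝ) : PlaneTree → ℝ
  | node ts => ρ (size (node ts)) * (ts.attach.map fun t => hookWeight ρ t.1).prod
decreasing_by simp only [PlaneTree.node.sizeOf_spec]; have := List.sizeOf_lt_of_mem t.2; omega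

end PlaneTree

/-- Composition `∑_{k ≥ 0} c_k F^k` of a coefficient sequence `c` with a formal
power series `F` having zero constant term. -/
noncomputable def seriesComp (c : ℕ → ℝ) (F : PowerSeries ℝ) : PowerSeries ℝ :=
  PowerSeries.mk fun n => ∑ k ∈ Finset.range (n + 1), c k * (PowerSeries.coeff n) (F ^ k)

/-- Composition `∑_{k ≥ 1} b_k H^k` of a coefficient sequence `b` (indexed by `k ≥ 1`)
with a formal power series `H` having zero constant term. -/
noncomputable def seriesComp1 (b : ℕ → ℝ) (H : PowerSeries ℝ) : PowerSeries ℝ :=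
  PowerSeries.mk fun n => ∑ k ∈ Finset.Icc 1 n, b k * (PowerSeries.coeff n) (H ^ k)

/-!
Both compositions are substitutions of power series, which compose associatively. Since `b`
inverts `φ - φ₀`, this gives `∑ b_k (G - φ₀)^k = ∑ b_k (φ(F) - φ₀)^k = F`, so the right-hand
side is `[zⁿ]F`. Cutting a tree of size `n` at its root leaves a list of `k` root subtrees of
total size `n - 1`, and the weight of the tree is `ρ(n) φ_k` times the product of their weights;
hence `[zⁿ]F = ρ(n) ∑_k φ_k [z^{n-1}] F^k = ρ(n) [z^{n-1}] G`.
-/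

open PowerSeries

section Composition

variable {R : Type*} [CommRing R]

lemma PowerSeries.coeff_pow_eq_zero_of_lt {H : R⟦X⟧} (hH : constantCoeff H = 0) {n k : ℕ}
    (hnk : n < k) : coeff n (H ^ k) = 0 :=
  X_pow_dvd_iff.1 (pow_dvd_pow_of_dvd (X_dvd_iff.2 hH) k) n hnk

lemma PowerSeries.coeff_subst_eq_sum {H : R⟦X⟧} (hH : constantCoeff H = 0) (f : R⟦X⟧) (n : ℕ) :
    coeff n (f.subst H) = ∑ k ∈ Finset.range (n + 1), coeff k f * coeff n (H ^ k) := by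
  rw [coeff_subst' (.of_constantCoeff_zero' hH)]
  refine finsum_eq_sum_of_support_subset _ fun k hk => Finset.mem_range.2 ?_
  by_contra! hkn
  exact hk (by simp only [coeff_pow_eq_zero_of_lt hH hkn, smul_zero])

end Composition

lemma seriesComp_eq_subst (c : ℕ → ℝ) {F : ℝ⟦X⟧} (hF : constantCoeff F = 0) :
    seriesComp c F = (mk c).subst F := by
  ext n
  rw [seriesComp, coeff_mk, coeff_subst_eq_sum hF]
  simp only [coeff_mk]

lemma seriesComp1_eq_subst (b : ℕ → ℝ) {H : ℝ⟦X⟧} (hH : constantCoeff H = 0) :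
    seriesComp1 b H = (mk b - C (b 0)).subst H := by
  ext n
  rw [seriesComp1, coeff_mk, coeff_subst_eq_sum hH, Finset.range_eq_Ico,
    Finset.sum_eq_sum_Ico_succ_bot n.succ_pos]
  simp only [map_sub, coeff_mk, coeff_C, ↓reduceIte, sub_self, zero_mul, zero_add]
  refine Finset.sum_congr (by ext; simp) fun k hk => ?_
  rw [if_neg (by simp at hk; omega), sub_zero]

lemma seriesComp1_seriesComp_sub_of_leftInverse {φ b : ℕ → ℝ}
    (hb : seriesComp1 b (mk φ - C (φ 0)) = X) {F : ℝ⟦X⟧} (hF : constantCoeff F = 0) :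
    seriesComp1 b (seriesComp φ F - C (φ 0)) = F := by
  have hP : constantCoeff (mk φ - C (φ 0)) = 0 := by simp
  have hFs : HasSubst F := .of_constantCoeff_zero' hF
  have hPs : HasSubst (mk φ - C (φ 0)) := .of_constantCoeff_zero' hP
  have hGF : seriesComp φ F - C (φ 0) = (mk φ - C (φ 0)).subst F := by
    rw [seriesComp_eq_subst φ hF, subst_sub hFs, subst_C]; rfl
  rw [hGF, seriesComp1_eq_subst b (constantCoeff_subst_eq_zero hF _ hP),
    ← subst_comp_subst_apply hPs hFs, ← seriesComp1_eq_subst b hP, hb, subst_X hFs]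

namespace PlaneTree

def children : PlaneTree → List PlaneTree
  | node ts => ts

lemma size_node (ts : List PlaneTree) : size (node ts) = 1 + (ts.map size).sum := by
  rw [size, List.attach_map_val]

lemma degWeight_node (φ : ℕ → ℝ) (ts : List PlaneTree) :
    degWeight φ (node ts) = φ ts.length * (ts.map (degWeight φ)).prod := by
  rw [degWeight, List.attach_map_val]

lemma hookWeight_node (ρ : ℕ → ℝ) (ts : List PlaneTree) :
    hookWeight ρ (node ts) = ρ (size (node ts)) * (ts.map (hookWeight ρ)).prod := by
  rw [hookWeight, List.attach_map_val]

lemma one_le_size (T : PlaneTree) : 1 ≤ T.size := by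
  cases T with | node ts => rw [size_node]; omega

lemma length_le_sum_map_size (ts : List PlaneTree) : ts.length ≤ (ts.map size).sum := by
  induction ts with
  | nil => simp
  | cons t ts ih => simp only [List.length_cons, List.map_cons, List.sum_cons]; grind [one_le_size]

lemma finite_setOf_size_le (n : ℕ) : {T : PlaneTree | T.size ≤ n}.Finite := by
  induction n with
  | zero => exact Set.finite_empty.subset fun T hT => absurd (one_le_size T) (by simp_all)
  | succ n ih =>
    have := ih.to_subtype
    refine ((List.finite_length_le _ n).image
      fun l : List {T : PlaneTree | T.size ≤ n} => node (l.map Subtype.val)).subset ?_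
    rintro ⟨ts⟩ hT
    rw [Set.mem_ofPred_eq, size_node] at hT
    have hts : ∀ t ∈ ts, t.size ≤ n := fun t ht =>
      (List.le_sum_of_mem (List.mem_map_of_mem ht)).trans (by omega)
    refine ⟨ts.attach.map fun t => ⟨t.1, hts t.1 t.2⟩, ?_, by simp⟩
    have := length_le_sum_map_size ts
    simp only [Set.mem_ofPred_eq, List.length_map, List.length_attach]
    omega

lemma finite_setOf_size_eq (n : ℕ) : {T : PlaneTree | T.size = n}.Finite :=
  (finite_setOf_size_le n).subset fun _ => le_of_eq

-- Such lists are the root subtrees of the trees of size `m + 1`.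
lemma finite_setOf_sum_map_size_eq (m : ℕ) :
    {ts : List PlaneTree | (ts.map size).sum = m}.Finite :=
  ((finite_setOf_size_eq (m + 1)).image children).subset fun ts hts =>
    ⟨node ts, by rw [Set.mem_ofPred_eq, size_node, hts, add_comm], rfl⟩

noncomputable def ofSize (n : ℕ) : Finset PlaneTree := (finite_setOf_size_eq n).toFinset

@[simp]
lemma mem_ofSize {n : ℕ} {T : PlaneTree} : T ∈ ofSize n ↔ T.size = n := by
  simp [ofSize]

noncomputable def forests (k m : ℕ) : Finset (List PlaneTree) :=
  (finite_setOf_sum_map_size_eq m).toFinset.filter (·.length = k)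

@[simp]
lemma mem_forests {k m : ℕ} {ts : List PlaneTree} :
    ts ∈ forests k m ↔ ts.length = k ∧ (ts.map size).sum = m := by
  simp [forests, and_comm]

lemma forests_zero (m : ℕ) : forests 0 m = if m = 0 then {[]} else ∅ := by
  ext ts
  split_ifs <;> aesop

section SizeSeries

variable {R : Type*} [CommSemiring R]

noncomputable def sizeSeries (w : PlaneTree → R) : R⟦X⟧ := mk fun n => ∑ T ∈ ofSize n, w T

lemma coeff_sizeSeries (w : PlaneTree → R) (n : ℕ) :
    coeff n (sizeSeries w) = ∑ T ∈ ofSize n, w T :=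
  coeff_mk _ _

lemma constantCoeff_sizeSeries (w : PlaneTree → R) : constantCoeff (sizeSeries w) = 0 := by
  rw [← coeff_zero_eq_constantCoeff_apply, coeff_sizeSeries]
  exact Finset.sum_eq_zero fun T hT => absurd (one_le_size T) (by simp_all)

lemma coeff_sizeSeries_pow (w : PlaneTree → R) (k m : ℕ) :
    coeff m (sizeSeries w ^ k) = ∑ ts ∈ forests k m, (ts.map w).prod := by
  induction k generalizing m with
  | zero => rw [pow_zero, coeff_one, forests_zero]; split_ifs <;> simp
  | succ k ih =>
    simp_rw [pow_succ', coeff_mul, coeff_sizeSeries, ih, Finset.sum_mul_sum]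
    rw [Finset.sum_sigma', Finset.sum_sigma']
    refine Finset.sum_nbij' (fun x => x.1.2 :: x.2)
      (fun ts => ⟨⟨((ts.headD (node [])).size, (ts.tail.map size).sum), ts.headD (node [])⟩,
        ts.tail⟩) ?_ ?_ ?_ ?_ (fun _ _ => rfl)
    · rintro ⟨⟨⟨i, j⟩, T⟩, ts⟩ h
      simp_all
    · rintro (_ | ⟨T, ts⟩) h <;> simp_all
    · rintro ⟨⟨⟨i, j⟩, T⟩, ts⟩ h
      simp_all
    · rintro (_ | ⟨T, ts⟩) h <;> simp_all

lemma sum_ofSize_succ {M : Type*} [AddCommMonoid M] (f : PlaneTree → M) (n : ℕ) :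
    ∑ T ∈ ofSize (n + 1), f T = ∑ k ∈ Finset.range (n + 1), ∑ ts ∈ forests k n, f (node ts) := by
  rw [Finset.sum_sigma']
  refine Finset.sum_nbij' (fun T => ⟨T.children.length, T.children⟩) (fun x => node x.2)
    ?_ ?_ ?_ ?_ ?_
  · rintro ⟨ts⟩ h
    have := length_le_sum_map_size ts
    simp_all [children, size_node]
    omega
  · rintro ⟨k, ts⟩ h
    simp_all [size_node, add_comm]
  · rintro ⟨⟩ -
    rfl
  · rintro ⟨k, ts⟩ h
    simp_all [children]
  · rintro ⟨⟩ -
    rfl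

lemma tsum_subtype_size_eq {M : Type*} [AddCommMonoid M] [TopologicalSpace M]
    (f : PlaneTree → M) (n : ℕ) :
    ∑' T : {T : PlaneTree // T.size = n}, f T = ∑ T ∈ ofSize n, f T := by
  rw [← Finset.tsum_subtype]
  exact (Equiv.subtypeEquivRight fun T => mem_ofSize.symm).tsum_eq (f ∘ Subtype.val)

end SizeSeries

noncomputable def weight (φ ρ : ℕ → ℝ) (T : PlaneTree) : ℝ := T.degWeight φ * T.hookWeight ρ

lemma weight_node (φ ρ : ℕ → ℝ) (ts : List PlaneTree) :
    weight φ ρ (node ts) = ρ (size (node ts)) * (φ ts.length * (ts.map (weight φ ρ)).prod) := by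
  rw [weight, degWeight_node, hookWeight_node, show ts.map (weight φ ρ)
    = ts.map fun t => t.degWeight φ * t.hookWeight ρ from rfl, List.prod_map_mul]
  ring

lemma coeff_succ_sizeSeries_weight (φ ρ : ℕ → ℝ) (n : ℕ) :
    coeff (n + 1) (sizeSeries (weight φ ρ))
      = ρ (n + 1) * coeff n (seriesComp φ (sizeSeries (weight φ ρ))) := by
  rw [coeff_sizeSeries, sum_ofSize_succ, seriesComp, coeff_mk, Finset.mul_sum]
  refine Finset.sum_congr rfl fun k _ => ?_
  rw [coeff_sizeSeries_pow, Finset.mul_sum, Finset.mul_sum]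
  refine Finset.sum_congr rfl fun ts hts => ?_
  rw [mem_forests] at hts
  rw [weight_node, size_node, hts.1, hts.2, add_comm]

end PlaneTree

open PlaneTree

theorem hook_length_simply_generated_forests_general
    (φ : ℕ → ℝ) (ρ : ℕ → ℝ) (b : ℕ → ℝ)
    (hb : seriesComp1 b (PowerSeries.mk φ - PowerSeries.C (φ 0)) = PowerSeries.X)
    (F G : PowerSeries ℝ)
    (hF : F = PowerSeries.mk fun n =>
      ∑' T : {T : PlaneTree // T.size = n}, T.1.degWeight φ * T.1.hookWeight ρ)
    (hG : G = seriesComp φ F)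
    (n : ℕ) (hn : 1 ≤ n) :
    ρ n * (PowerSeries.coeff (n - 1)) G
      = (PowerSeries.coeff n) (seriesComp1 b (G - PowerSeries.C (φ 0))) := by
  have hF' : F = sizeSeries (weight φ ρ) := by
    ext m
    rw [hF, coeff_mk, coeff_sizeSeries]
    exact tsum_subtype_size_eq (weight φ ρ) m
  obtain ⟨m, rfl⟩ := Nat.exists_eq_add_of_le' hn
  subst hG hF'
  rw [seriesComp1_seriesComp_sub_of_leftInverse hb (constantCoeff_sizeSeries _),
    Nat.add_sub_cancel, coeff_succ_sizeSeries_weight]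

/-- **Hook length formula for forests of simply generated trees.**
With `G(z) = φ(F(z))` the forest generating function and `b` the coefficient
sequence of a compositional inverse of `φ` at `φ₀` (i.e. `∑_{k≥1} b_k (φ(t) − φ₀)^k = t`),
for all `n ≥ 1`: `ρ(n)·[z^{n-1}]G(z) = [zⁿ] ∑_{k≥1} b_k (G(z) − φ₀)^k`. -/
theorem hook_length_simply_generated_forests
    (φ : ℕ → ℝ) (hφ : 0 < φ 0) (ρ : ℕ → ℝ) (b : ℕ → ℝ)
    (hb : seriesComp1 b (PowerSeries.mk φ - PowerSeries.C (φ 0)) = PowerSeries.X)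
    (F G : PowerSeries ℝ)
    (hF : F = PowerSeries.mk fun n =>
      ∑' T : {T : PlaneTree // T.size = n}, T.1.degWeight φ * T.1.hookWeight ρ)
    (hG : G = seriesComp φ F)
    (n : ℕ) (hn : 1 ≤ n) :
    ρ n * (PowerSeries.coeff (n - 1)) G
      = (PowerSeries.coeff n) (seriesComp1 b (G - PowerSeries.C (φ 0))) :=
  hook_length_simply_generated_forests_general φ ρ b hb F G hF hG n hn
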